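/- arXiv:1703.06482 — 3 statements merged into one kernel-verified Lean document; each statement's English description precedes it below -/
import Mathlib

section
/- For integers n and k with 1 ≤ k ≤ n−2, no set of at most n−2 vertices of G_{n,k} is a resolving set for W = {w_A : A a k-element subset of [n]}: for every set S of vertices of G_{n,k} with |S| ≤ n−2 there exist distinct k-element subsets A and B of [n] such that dist(w_A, s) = dist(w_B, s) for every s ∈ S. -/
/-- Vertex set of the graph `G_{n,k}`: vertices `v_i` for `i ∈ [n]` (as `Sum.inl i`)
and `w_A` for `A` a `k`-element subset of `[n]` (as `Sum.inr A`). -/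
abbrev Vnk (n k : ℕ) := Fin n ⊕ {A : Finset (Fin n) // A.card = k}

/-- The graph `G_{n,k}`: edges `w_A w_B` for all distinct `k`-subsets `A, B`,
and `v_i w_A` whenever `i ∉ A`. -/
def Gnk (n k : ℕ) : SimpleGraph (Vnk n k) where
  Adj u v :=
    match u, v with
    | Sum.inl _, Sum.inl _ => False
    | Sum.inl i, Sum.inr A => i ∉ A.1
    | Sum.inr A, Sum.inl i => i ∉ A.1
    | Sum.inr A, Sum.inr B => A ≠ B
  symm := by
    constructor
    rintro (i | A) (j | B) h
    · exact h
    · exact h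
    · exact h
    · exact fun e => h e.symm
  loopless := by
    constructor
    rintro (i | A) h
    · exact h
    · exact h rfl

/-!
Seen from `w_A`, a vertex `w_C` is at distance `0` or `1` according as `C = A`, and `v_i` at
distance `2` or `1` according as `i ∈ A` (a common neighbour `w_B` with `i ∉ B` exists as `k < n`).
So if `S` consists of the `v_i` with `i ∈ I` and the `w_C` with `C ∈ T`, it does not separate
`w_A` from `w_B` as soon as `A, B ∉ T` and `A ∩ I = B ∩ I`. The `k`-sets with a fixed trace
`J ⊆ I`, `#J = k - r`, include the sets `K ∪ J` with `K` an `r`-subset of `Iᶜ`; for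
`1 ≤ r < #Iᶜ` there are at least `#Iᶜ ≥ #T + 2` of them, so two avoid `T`.
-/

open Finset

theorem Nat.self_le_choose {m r : ℕ} (hr : 0 < r) (hrm : r < m) : m ≤ m.choose r := by
  induction m generalizing r with
  | zero => omega
  | succ m ih =>
    obtain ⟨r, rfl⟩ := Nat.exists_eq_add_of_lt hr
    rw [zero_add, Nat.choose_succ_succ']
    rcases Nat.eq_zero_or_pos r with rfl | hr'
    · simp
    · have := ih hr' (by omega)
      have := Nat.choose_pos (show r + 1 ≤ m by omega)
      omega

section Trace

variable {α : Type*} [Fintype α] [DecidableEq α]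

theorem exists_le_card_filter_inter_eq {k : ℕ} (hk : 0 < k) (hkα : k < Fintype.card α)
    (I : Finset α) (hI : 2 ≤ #Iᶜ) :
    ∃ J, #Iᶜ ≤ #{A ∈ powersetCard k univ | A ∩ I = J} := by
  -- `1 ≤ r < #Iᶜ` makes `(#Iᶜ).choose r ≥ #Iᶜ`, and `k < card α` leaves room for `k - r` points in `I`
  set r := min k (#Iᶜ - 1) with hr
  have hkr : k - r ≤ #I := by have := card_compl I; omega
  obtain ⟨J, hJI, hJ⟩ := exists_subset_card_eq hkr
  refine ⟨J, ?_⟩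
  have hdisj : ∀ K ∈ powersetCard r Iᶜ, Disjoint K J := fun K hK =>
    disjoint_of_subset_right hJI (subset_compl_iff_disjoint_right.1 (mem_powersetCard.1 hK).1)
  calc #Iᶜ ≤ (#Iᶜ).choose r := Nat.self_le_choose (by omega) (by omega)
    _ = #((powersetCard r Iᶜ).image (· ∪ J)) := by
      rw [card_image_of_injOn, card_powersetCard]
      intro K hK L hL hKL
      simp only at hKL
      rw [← union_sdiff_cancel_right (hdisj K hK), hKL, union_sdiff_cancel_right (hdisj L hL)]
    _ ≤ _ := by
      refine card_le_card fun A hA => ?_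
      obtain ⟨K, hK, rfl⟩ := mem_image.1 hA
      have hKI : K ∩ I = ∅ := disjoint_iff_inter_eq_empty.1
        (subset_compl_iff_disjoint_right.1 (mem_powersetCard.1 hK).1)
      rw [mem_filter, mem_powersetCard, card_union_of_disjoint (hdisj K hK),
        (mem_powersetCard.1 hK).2, hJ, union_inter_distrib_right, hKI, inter_eq_left.2 hJI]
      exact ⟨⟨subset_univ _, by omega⟩, empty_union J⟩

theorem exists_ne_notMem_inter_eq {k : ℕ} (hk : 0 < k) (hkα : k < Fintype.card α)
    (I : Finset α) (T : Finset (Finset α)) (hIT : #I + #T + 2 ≤ Fintype.card α) :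
    ∃ A B, A ≠ B ∧ #A = k ∧ #B = k ∧ A ∉ T ∧ B ∉ T ∧ A ∩ I = B ∩ I := by
  have hIc : #Iᶜ = Fintype.card α - #I := card_compl I
  obtain ⟨J, hJ⟩ := exists_le_card_filter_inter_eq hk hkα I (by omega)
  have : 1 < #({A ∈ powersetCard k (univ : Finset α) | A ∩ I = J} \ T) := by
    have := le_card_sdiff T {A ∈ powersetCard k (univ : Finset α) | A ∩ I = J}
    omega
  obtain ⟨A, hA, B, hB, hAB⟩ := one_lt_card.1 this
  simp only [mem_sdiff, mem_filter, mem_powersetCard] at hA hB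
  exact ⟨A, B, hAB, hA.1.1.2, hB.1.1.2, hA.2, hB.2, hA.1.2.trans hB.1.2.symm⟩

end Trace

namespace Gnk

variable {n k : ℕ}

theorem dist_inr_inr (A B : {A : Finset (Fin n) // #A = k}) :
    (Gnk n k).dist (.inr A) (.inr B) = if A = B then 0 else 1 := by
  split_ifs with h
  · rw [h, SimpleGraph.dist_self]
  · exact SimpleGraph.dist_eq_one_iff_adj.2 h

theorem dist_inr_inl (hkn : k < n) (A : {A : Finset (Fin n) // #A = k}) (i : Fin n) :
    (Gnk n k).dist (.inr A) (.inl i) = if i ∈ A.1 then 2 else 1 := by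
  split_ifs with hi
  · obtain ⟨B, hB, hBk⟩ : ∃ B ⊆ ({i}ᶜ : Finset (Fin n)), #B = k :=
      exists_subset_card_eq (by rw [card_compl, card_singleton, Fintype.card_fin]; omega)
    have hiB : i ∉ B := by simpa using @hB i
    have hAB : A ≠ ⟨B, hBk⟩ := by rintro rfl; exact hiB hi
    have hcommon : Sum.inr ⟨B, hBk⟩ ∈ (Gnk n k).commonNeighbors (.inr A) (.inl i) :=
      (Gnk n k).mem_commonNeighbors.2 ⟨hAB, hiB⟩
    have : (Gnk n k).edist (.inr A) (.inl i) = 2 :=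
      SimpleGraph.edist_eq_two_iff.2 ⟨Sum.inr_ne_inl, fun h => h hi, _, hcommon⟩
    simp [SimpleGraph.dist, this]
  · exact SimpleGraph.dist_eq_one_iff_adj.2 hi

end Gnk

/-- For `1 ≤ k ≤ n - 2`, no set of at most `n - 2` vertices of `G_{n,k}` resolves
`W = {w_A}`: for every such set `S` there are distinct `k`-subsets `A ≠ B` with
`dist(w_A, s) = dist(w_B, s)` for all `s ∈ S`. -/
theorem stmt4 (n k : ℕ) (hk : 1 ≤ k) (hkn : k ≤ n - 2)
    (S : Finset (Vnk n k)) (hS : S.card ≤ n - 2) :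
    ∃ A B : {A : Finset (Fin n) // A.card = k}, A ≠ B ∧
      ∀ s ∈ S, (Gnk n k).dist (Sum.inr A) s = (Gnk n k).dist (Sum.inr B) s := by
  have hST : #S.toLeft + #(S.toRight.map (.subtype _)) + 2 ≤ Fintype.card (Fin n) := by
    rw [card_map, card_toLeft_add_card_toRight, Fintype.card_fin]
    omega
  obtain ⟨A, B, hAB, hA, hB, hAS, hBS, hAB_inter⟩ :=
    exists_ne_notMem_inter_eq hk (by rw [Fintype.card_fin]; omega) _ _ hST
  refine ⟨⟨A, hA⟩, ⟨B, hB⟩, fun h => hAB (congrArg Subtype.val h), ?_⟩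
  rintro (i | C) hs
  · have hiAB : i ∈ A ↔ i ∈ B := by
      simpa [mem_toLeft.2 hs] using congrArg (i ∈ ·) hAB_inter
    rw [Gnk.dist_inr_inl (by omega), Gnk.dist_inr_inl (by omega)]
    simp only [hiAB]
  · have hC : C.1 ∈ S.toRight.map (.subtype _) := mem_map_of_mem _ (mem_toRight.2 hs)
    rw [Gnk.dist_inr_inr, Gnk.dist_inr_inr, if_neg, if_neg] <;> rintro rfl <;> contradiction
end

section
/- For every integer n ≥ 1, all x, x′ ∈ L_n and all y ∈ W_n, the graph distance in G_n satisfies: dist(d_x, c_y) = 1 if x is a prefix of y and dist(d_x, c_y) = 3 otherwise; dist(d_x, b_y) = 2; dist(d_x, a_{x′}) = 3; and for x ≠ x′, dist(d_x, d_{x′}) = 2 if one of x, x′ is a prefix of the other and dist(d_x, d_{x′}) = 4 otherwise. -/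
/-!
`G_n` is bipartite, with `a` and `c` on one side and `b` and `d` on the other, so every walk
between two vertices has the parity of their distance. Hence exhibiting a walk of length `k`
pins the distance down to `k` as soon as it is known to be at least `k - 1`, and these lower
bounds only concern distances `0`, `1` and `2`: equality, adjacency and common neighbours.
A common neighbour of `d_x` and `d_{x'}` is some `c_y` with `y` extending both, which forces
`x` and `x'` to be comparable.
The walks go through `c_{x0…0}`, the padding of `x` by zeros, which is adjacent to every `b_y`
and to `d_{x'}` for every prefix `x'` of `x`.
-/

/-- `L n`: binary words of length at most `n` that are empty or end in `1` (`true`). -/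
abbrev Ln (n : ℕ) := {x : List Bool // x.length ≤ n ∧ (x = [] ∨ x.getLast? = some true)}

/-- `W n`: binary words of length exactly `n`. -/
abbrev Wn (n : ℕ) := {y : List Bool // y.length = n}

/-- Vertex set of the graph `G_n`: a copy of `L n` (the `a` vertices), two copies of `W n`
(the `b` and `c` vertices) and another copy of `L n` (the `d` vertices). -/
abbrev VGn (n : ℕ) := Ln n ⊕ Wn n ⊕ Wn n ⊕ Ln n

def va {n : ℕ} (x : Ln n) : VGn n := Sum.inl x
def vb {n : ℕ} (y : Wn n) : VGn n := Sum.inr (Sum.inl y)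
def vc {n : ℕ} (y : Wn n) : VGn n := Sum.inr (Sum.inr (Sum.inl y))
def vd {n : ℕ} (x : Ln n) : VGn n := Sum.inr (Sum.inr (Sum.inr x))

/-- The graph `G_n`: edges `b_y c_z` for all `y, z ∈ W n`, `a_x b_y` whenever `x` is a
prefix of `y`, and `d_x c_y` whenever `x` is a prefix of `y`. -/
def Gn (n : ℕ) : SimpleGraph (VGn n) where
  Adj u v :=
    match u, v with
    | Sum.inl x, Sum.inr (Sum.inl y) => x.1 <+: y.1
    | Sum.inr (Sum.inl y), Sum.inl x => x.1 <+: y.1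
    | Sum.inr (Sum.inl _), Sum.inr (Sum.inr (Sum.inl _)) => True
    | Sum.inr (Sum.inr (Sum.inl _)), Sum.inr (Sum.inl _) => True
    | Sum.inr (Sum.inr (Sum.inl y)), Sum.inr (Sum.inr (Sum.inr x)) => x.1 <+: y.1
    | Sum.inr (Sum.inr (Sum.inr x)), Sum.inr (Sum.inr (Sum.inl y)) => x.1 <+: y.1
    | _, _ => False
  symm := by
    constructor
    rintro (x | y | z | w) (x' | y' | z' | w') h <;> exact h
  loopless := by
    constructor
    rintro (x | y | z | w) h <;> exact h

namespace SimpleGraph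

variable {V : Type*} {G : SimpleGraph V} {u v : V}

theorem Coloring.dist_eq_of_length_eq (c : G.Coloring Bool) (p : G.Walk u v) {k : ℕ}
    (hp : p.length = k) (h : k ≤ G.dist u v + 1) : G.dist u v = k := by
  obtain ⟨q, hq⟩ := p.reachable.exists_walk_length_eq_dist
  have hpar : Even (G.dist u v) ↔ Even k := by
    rw [← hq, ← hp, c.even_length_iff_congr q, c.even_length_iff_congr p]
  have hle : G.dist u v ≤ k := hp ▸ G.dist_le p
  rw [Nat.even_iff, Nat.even_iff] at hpar
  omega

theorem Reachable.two_le_dist (hr : G.Reachable u v) (hne : u ≠ v) (hadj : ¬G.Adj u v) :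
    2 ≤ G.dist u v := by
  have hpos := hr.pos_dist_of_ne hne
  have hne_one : G.dist u v ≠ 1 := mt dist_eq_one_iff_adj.mp hadj
  omega

theorem commonNeighbors_nonempty_of_dist_eq_two (h : G.dist u v = 2) :
    (G.commonNeighbors u v).Nonempty := by
  have hr := Reachable.of_dist_ne_zero (h ▸ two_ne_zero)
  have he : G.edist u v = 2 := by rw [← hr.coe_dist_eq_edist, h]; rfl
  exact (edist_eq_two_iff.mp he).2.2

end SimpleGraph

namespace Gn

open SimpleGraph

variable {n : ℕ}

def bicoloring (n : ℕ) : (Gn n).Coloring Bool :=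
  Coloring.mk
    (fun
      | Sum.inl _ => true
      | Sum.inr (Sum.inl _) => false
      | Sum.inr (Sum.inr (Sum.inl _)) => true
      | Sum.inr (Sum.inr (Sum.inr _)) => false)
    (by rintro (_ | _ | _ | _) (_ | _ | _ | _) h <;> simp_all [Gn])

theorem adj_vd_vc {x : Ln n} {y : Wn n} : (Gn n).Adj (vd x) (vc y) ↔ x.1 <+: y.1 := Iff.rfl

theorem adj_vc_vd {x : Ln n} {y : Wn n} : (Gn n).Adj (vc y) (vd x) ↔ x.1 <+: y.1 := Iff.rfl

theorem adj_vc_vb (y z : Wn n) : (Gn n).Adj (vc y) (vb z) := trivial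

theorem adj_vb_va {x : Ln n} {y : Wn n} : (Gn n).Adj (vb y) (va x) ↔ x.1 <+: y.1 := Iff.rfl

theorem not_adj_vd_va (x x' : Ln n) : ¬(Gn n).Adj (vd x) (va x') := id

theorem not_adj_vd_vd (x x' : Ln n) : ¬(Gn n).Adj (vd x) (vd x') := id

theorem exists_eq_vc_of_adj_vd {x : Ln n} {w : VGn n} (h : (Gn n).Adj (vd x) w) :
    ∃ y : Wn n, x.1 <+: y.1 ∧ w = vc y := by
  rcases w with _ | _ | y | _
  · exact h.elim
  · exact h.elim
  · exact ⟨y, h, rfl⟩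
  · exact h.elim

def pad (x : Ln n) : Wn n :=
  ⟨x.1 ++ List.replicate (n - x.1.length) false, by
    have := x.2.1
    simp only [List.length_append, List.length_replicate]
    omega⟩

theorem prefix_pad (x : Ln n) : x.1 <+: (pad x).1 := List.prefix_append _ _

theorem dist_vd_vc_of_not_prefix {x : Ln n} {y : Wn n} (h : ¬x.1 <+: y.1) :
    (Gn n).dist (vd x) (vc y) = 3 := by
  let p : (Gn n).Walk (vd x) (vc y) :=
    .cons (adj_vd_vc.mpr (prefix_pad x)) (.cons (adj_vc_vb _ y) (.cons (adj_vc_vb y y).symm .nil))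
  have hlow := p.reachable.two_le_dist (by simp [vd, vc]) (mt adj_vd_vc.mp h)
  exact (bicoloring n).dist_eq_of_length_eq p rfl (by omega)

theorem dist_vd_vb (x : Ln n) (y : Wn n) : (Gn n).dist (vd x) (vb y) = 2 := by
  let p : (Gn n).Walk (vd x) (vb y) :=
    .cons (adj_vd_vc.mpr (prefix_pad x)) (.cons (adj_vc_vb _ y) .nil)
  have hlow := p.reachable.pos_dist_of_ne (by simp [vd, vb])
  exact (bicoloring n).dist_eq_of_length_eq p rfl (by omega)

theorem dist_vd_va (x x' : Ln n) : (Gn n).dist (vd x) (va x') = 3 := by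
  let p : (Gn n).Walk (vd x) (va x') :=
    .cons (adj_vd_vc.mpr (prefix_pad x))
      (.cons (adj_vc_vb _ (pad x')) (.cons (adj_vb_va.mpr (prefix_pad x')) .nil))
  have hlow := p.reachable.two_le_dist (by simp [vd, va]) (not_adj_vd_va x x')
  exact (bicoloring n).dist_eq_of_length_eq p rfl (by omega)

theorem dist_vd_vd_of_prefix {x x' : Ln n} (hne : x ≠ x') (h : x.1 <+: x'.1) :
    (Gn n).dist (vd x) (vd x') = 2 := by
  let p : (Gn n).Walk (vd x) (vd x') :=
    .cons (adj_vd_vc.mpr (h.trans (prefix_pad x'))) (.cons (adj_vc_vd.mpr (prefix_pad x')) .nil)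
  have hlow := p.reachable.pos_dist_of_ne (by simpa [vd] using hne)
  exact (bicoloring n).dist_eq_of_length_eq p rfl (by omega)

theorem dist_vd_vd_of_not_prefix {x x' : Ln n} (h : ¬(x.1 <+: x'.1 ∨ x'.1 <+: x.1)) :
    (Gn n).dist (vd x) (vd x') = 4 := by
  let p : (Gn n).Walk (vd x) (vd x') :=
    .cons (adj_vd_vc.mpr (prefix_pad x)) (.cons (adj_vc_vb _ (pad x'))
      (.cons (adj_vc_vb _ _).symm (.cons (adj_vc_vd.mpr (prefix_pad x')) .nil)))
  have hne : vd x ≠ vd x' := by rintro ⟨⟩; exact h (.inl List.prefix_rfl)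
  have hlow := p.reachable.two_le_dist hne (not_adj_vd_vd x x')
  have hne_two : (Gn n).dist (vd x) (vd x') ≠ 2 := fun hd => by
    obtain ⟨w, hxw, hx'w⟩ := commonNeighbors_nonempty_of_dist_eq_two hd
    obtain ⟨y, hxy, rfl⟩ := exists_eq_vc_of_adj_vd hxw
    exact h (List.prefix_or_prefix_of_prefix hxy (adj_vd_vc.mp hx'w))
  exact (bicoloring n).dist_eq_of_length_eq p rfl (by omega)

end Gn

theorem stmt10_general (n : ℕ) (x x' : Ln n) (y : Wn n) :
    ((x.1 <+: y.1 → (Gn n).dist (vd x) (vc y) = 1) ∧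
     (¬ x.1 <+: y.1 → (Gn n).dist (vd x) (vc y) = 3)) ∧
    (Gn n).dist (vd x) (vb y) = 2 ∧
    (Gn n).dist (vd x) (va x') = 3 ∧
    (x ≠ x' →
      ((x.1 <+: x'.1 ∨ x'.1 <+: x.1) → (Gn n).dist (vd x) (vd x') = 2) ∧
      (¬ (x.1 <+: x'.1 ∨ x'.1 <+: x.1) → (Gn n).dist (vd x) (vd x') = 4)) := by
  refine ⟨⟨fun h => SimpleGraph.dist_eq_one_iff_adj.mpr h, Gn.dist_vd_vc_of_not_prefix⟩,
    Gn.dist_vd_vb x y, Gn.dist_vd_va x x', fun hne => ⟨?_, Gn.dist_vd_vd_of_not_prefix⟩⟩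
  rintro (h | h)
  · exact Gn.dist_vd_vd_of_prefix hne h
  · rw [SimpleGraph.dist_comm]
    exact Gn.dist_vd_vd_of_prefix hne.symm h

/-- Distances from `d` vertices in `G_n` (`n ≥ 1`): `dist(d_x, c_y)` is `1` or `3`
according to whether `x` is a prefix of `y`; `dist(d_x, b_y) = 2`; `dist(d_x, a_x') = 3`;
and for `x ≠ x'`, `dist(d_x, d_x')` is `2` or `4` according to whether one of `x, x'`
is a prefix of the other. -/
theorem stmt10 (n : ℕ) (hn : 1 ≤ n) (x x' : Ln n) (y : Wn n) :
    ((x.1 <+: y.1 → (Gn n).dist (vd x) (vc y) = 1) ∧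
     (¬ x.1 <+: y.1 → (Gn n).dist (vd x) (vc y) = 3)) ∧
    (Gn n).dist (vd x) (vb y) = 2 ∧
    (Gn n).dist (vd x) (va x') = 3 ∧
    (x ≠ x' →
      ((x.1 <+: x'.1 ∨ x'.1 <+: x.1) → (Gn n).dist (vd x) (vd x') = 2) ∧
      (¬ (x.1 <+: x'.1 ∨ x'.1 <+: x.1) → (Gn n).dist (vd x) (vd x') = 4)) :=
  stmt10_general n x x' y
end

section
/- For every integer n ≥ 1 and every binary word y of length n−1, let N = {b_{y0}, b_{y1}} ∪ {a_x : x ∈ L_n, x a prefix of y0 or of y1} ∪ {c_z : z ∈ W_n}, and let P = {a_{y1}} ∪ {d_x : x ∈ L_n, x ≠ ∅}, where y0 and y1 denote y followed by the bit 0 or 1 respectively and ∅ is the empty word. If u and u′ are distinct vertices in N with dist(u, p) = dist(u′, p) for every p ∈ P, then both u and u′ lie in {a_x : x ∈ L_n} ∪ {c_{0⋯0}}, where 0⋯0 is the all-zeros word of length n. -/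
theorem SimpleGraph.Coloring.eq_of_dist_eq {V : Type*} {G : SimpleGraph V} (hG : G.Preconnected)
    (c : G.Coloring Bool) {u u' p : V} (h : G.dist u p = G.dist u' p) : c u = c u' := by
  obtain ⟨q, hq⟩ := (hG u p).exists_walk_length_eq_dist
  obtain ⟨q', hq'⟩ := (hG u' p).exists_walk_length_eq_dist
  have hpar := c.even_length_iff_congr q
  rw [hq, h, ← hq', c.even_length_iff_congr q'] at hpar
  revert hpar
  cases c u <;> cases c u' <;> cases c p <;> simp

theorem SimpleGraph.adj_iff_of_dist_eq {V : Type*} {G : SimpleGraph V} {u u' p : V}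
    (h : G.dist u p = G.dist u' p) : G.Adj u p ↔ G.Adj u' p := by
  rw [← SimpleGraph.dist_eq_one_iff_adj, h, SimpleGraph.dist_eq_one_iff_adj]

namespace List

theorem eq_of_forall_append_true_isPrefix_iff {z z' : List Bool} (hlen : z.length = z'.length)
    (h : ∀ w, w ++ [true] <+: z ↔ w ++ [true] <+: z') : z = z' := by
  induction z generalizing z' with
  | nil => simpa [eq_comm] using hlen
  | cons a zs ih =>
    obtain _ | ⟨a', zs'⟩ := z'
    · simp at hlen
    have ha : a = a' := by simpa [cons_prefix_cons] using h []
    subst ha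
    congr 1
    exact ih (by simpa using hlen) fun w => by simpa [cons_prefix_cons] using h (a :: w)

theorem eq_replicate_false_of_forall_not_append_true_isPrefix {z : List Bool}
    (h : ∀ w, ¬ w ++ [true] <+: z) : z = replicate z.length false := by
  refine eq_of_forall_append_true_isPrefix_iff (by simp) fun w => iff_of_false (h w) fun hw => ?_
  simpa using eq_of_mem_replicate (hw.subset (mem_append_right w (mem_singleton_self true)))

end List

namespace Gn

open SimpleGraph

variable {n : ℕ}

def padFalse (x : Ln n) : Wn n :=
  ⟨x.1 ++ List.replicate (n - x.1.length) false, by have := x.2.1; simp; omega⟩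

theorem isPrefix_padFalse (x : Ln n) : x.1 <+: (padFalse x).1 := List.prefix_append _ _

def appendTrue (w : List Bool) (h : (w ++ [true]).length ≤ n) : Ln n :=
  ⟨w ++ [true], h, Or.inr List.getLast?_concat⟩

theorem adj_va_vb {x : Ln n} {w : Wn n} : (Gn n).Adj (va x) (vb w) ↔ x.1 <+: w.1 := Iff.rfl

theorem adj_vb_vc {w z : Wn n} : (Gn n).Adj (vb w) (vc z) := trivial

theorem adj_vd_iff {v : VGn n} {x : Ln n} :
    (Gn n).Adj v (vd x) ↔ ∃ z : Wn n, v = vc z ∧ x.1 <+: z.1 := by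
  rcases v with _ | _ | z | _ <;> simp [Gn, vc, vd]

theorem preconnected : (Gn n).Preconnected := by
  let z₀ : Wn n := ⟨List.replicate n false, by simp⟩
  have hc : ∀ z, (Gn n).Reachable (vc z) (vc z₀) := fun z =>
    (adj_vb_vc (w := z₀) (z := z)).reachable.symm.trans adj_vb_vc.reachable
  suffices ∀ v, (Gn n).Reachable v (vc z₀) from fun u v => (this u).trans (this v).symm
  rintro (x | w | z | x)
  · exact (adj_va_vb.mpr (isPrefix_padFalse x)).reachable.trans adj_vb_vc.reachable
  · exact adj_vb_vc.reachable
  · exact hc z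
  · exact (adj_vd_iff.mpr ⟨_, rfl, isPrefix_padFalse x⟩).symm.reachable.trans (hc _)

def coloring : (Gn n).Coloring Bool :=
  SimpleGraph.Coloring.mk
    (fun | Sum.inl _ | Sum.inr (Sum.inr (Sum.inl _)) => false | _ => true)
    (by rintro (_ | _ | _ | _) (_ | _ | _ | _) h <;> simp_all [Gn])

-- The sets `N` and `P` of the statement.
def candidates (n : ℕ) (y : List Bool) : Set (VGn n) :=
  {u | (∃ w : Wn n, (w.1 = y ++ [false] ∨ w.1 = y ++ [true]) ∧ u = vb w) ∨
    (∃ x : Ln n, (x.1 <+: y ++ [false] ∨ x.1 <+: y ++ [true]) ∧ u = va x) ∨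
    (∃ z : Wn n, u = vc z)}

def landmarks (n : ℕ) (y : List Bool) : Set (VGn n) :=
  {p | (∃ x : Ln n, x.1 = y ++ [true] ∧ p = va x) ∨ (∃ x : Ln n, x.1 ≠ [] ∧ p = vd x)}

variable {y : List Bool}

theorem false_of_vb_mem_candidates {w : Wn n} (hw : w.1 = y ++ [false] ∨ w.1 = y ++ [true])
    {u' : VGn n} (hu' : u' ∈ candidates n y) (hne : vb w ≠ u')
    (heq : ∀ p ∈ landmarks n y, (Gn n).dist (vb w) p = (Gn n).dist u' p) : False := by
  have hlen : (y ++ [true]).length ≤ n := by rcases hw with h | h <;> simp [← w.2, h]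
  set x := appendTrue y hlen
  have hcol := coloring.eq_of_dist_eq preconnected
    (heq (vd x) (Or.inr ⟨x, by simp [x, appendTrue], rfl⟩))
  obtain ⟨w', hw', rfl⟩ :
      ∃ w' : Wn n, (w'.1 = y ++ [false] ∨ w'.1 = y ++ [true]) ∧ u' = vb w' := by
    rcases hu' with h | ⟨_, -, rfl⟩ | ⟨_, rfl⟩
    · exact h
    all_goals exact Bool.noConfusion hcol
  have hx : x.1 <+: w.1 ↔ x.1 <+: w'.1 :=
    adj_iff_of_dist_eq (heq (va x) (Or.inl ⟨x, rfl, rfl⟩))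
  refine hne (congrArg vb (Subtype.ext ?_))
  rcases hw with h | h <;> rcases hw' with h' | h' <;> simp [x, appendTrue, h, h'] at hx ⊢

theorem eq_replicate_of_dist_vd_eq {z : Wn n} {u' : VGn n} (hne : vc z ≠ u')
    (heq : ∀ x : Ln n, x.1 ≠ [] → (Gn n).dist (vc z) (vd x) = (Gn n).dist u' (vd x)) :
    z.1 = List.replicate n false := by
  have key (w : List Bool) (hl : (w ++ [true]).length ≤ n) :
      w ++ [true] <+: z.1 ↔ ∃ z' : Wn n, u' = vc z' ∧ w ++ [true] <+: z'.1 :=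
    (adj_iff_of_dist_eq (heq (appendTrue w hl) (by simp [appendTrue]))).trans adj_vd_iff
  by_cases hc : ∃ z' : Wn n, u' = vc z'
  · obtain ⟨z', rfl⟩ := hc
    refine absurd (congrArg vc (Subtype.ext ?_)) hne
    refine List.eq_of_forall_append_true_isPrefix_iff (z.2.trans z'.2.symm) fun w => ?_
    by_cases hl : (w ++ [true]).length ≤ n
    · simpa [vc, Subtype.ext_iff, z'.2] using key w hl
    · exact iff_of_false (fun h => hl (h.length_le.trans z.2.le))
        (fun h => hl (h.length_le.trans z'.2.le))
  · refine (List.eq_replicate_false_of_forall_not_append_true_isPrefix fun w hw => ?_).trans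
      (by rw [z.2])
    exact hc (((key w (hw.length_le.trans z.2.le)).mp hw).imp fun _ => And.left)

theorem mem_of_dist_eq {u u' : VGn n} (hne : u ≠ u') (hu : u ∈ candidates n y)
    (hu' : u' ∈ candidates n y)
    (heq : ∀ p ∈ landmarks n y, (Gn n).dist u p = (Gn n).dist u' p) :
    (∃ x : Ln n, u = va x) ∨ u = vc ⟨List.replicate n false, by simp⟩ := by
  rcases hu with ⟨w, hw, rfl⟩ | ⟨x, -, rfl⟩ | ⟨z, rfl⟩
  · exact (false_of_vb_mem_candidates hw hu' hne heq).elim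
  · exact Or.inl ⟨x, rfl⟩
  · exact Or.inr (congrArg vc (Subtype.ext
      (eq_replicate_of_dist_vd_eq hne fun x hx => heq _ (Or.inr ⟨x, hx, rfl⟩))))

end Gn

/-- For `n ≥ 1` and a word `y` of length `n - 1`, let
`N = {b_{y0}, b_{y1}} ∪ {a_x : x a prefix of y0 or of y1} ∪ {c_z : z ∈ W_n}` and
`P = {a_{y1}} ∪ {d_x : x ≠ ∅}`. If distinct `u, u' ∈ N` have equal distances to every
vertex of `P`, then both lie in `{a_x : x ∈ L_n} ∪ {c_{0⋯0}}`. -/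
theorem stmt15 (n : ℕ) (y : List Bool)
    (u u' : VGn n) (hne : u ≠ u')
    (hu : (∃ w : Wn n, (w.1 = y ++ [false] ∨ w.1 = y ++ [true]) ∧ u = vb w) ∨
          (∃ x : Ln n, (x.1 <+: y ++ [false] ∨ x.1 <+: y ++ [true]) ∧ u = va x) ∨
          (∃ z : Wn n, u = vc z))
    (hu' : (∃ w : Wn n, (w.1 = y ++ [false] ∨ w.1 = y ++ [true]) ∧ u' = vb w) ∨
           (∃ x : Ln n, (x.1 <+: y ++ [false] ∨ x.1 <+: y ++ [true]) ∧ u' = va x) ∨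
           (∃ z : Wn n, u' = vc z))
    (heq : ∀ p : VGn n,
      ((∃ x : Ln n, x.1 = y ++ [true] ∧ p = va x) ∨
       (∃ x : Ln n, x.1 ≠ [] ∧ p = vd x)) →
      (Gn n).dist u p = (Gn n).dist u' p) :
    ((∃ x : Ln n, u = va x) ∨ u = vc ⟨List.replicate n false, by simp⟩) ∧
    ((∃ x : Ln n, u' = va x) ∨ u' = vc ⟨List.replicate n false, by simp⟩) :=
  ⟨Gn.mem_of_dist_eq hne hu hu' heq,
    Gn.mem_of_dist_eq hne.symm hu' hu fun p hp => (heq p hp).symm⟩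
end
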